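/- For every positive integer n, Σ_{k=1}^{n} C(2n, n−k) · k^4 = 2^(2n−3) · n · (3n − 1). -/

import Mathlib

open Finset

/-!
Under `j ↦ 2n - j` the terms of `∑ⱼ C(2n, j) (j - n)⁴` pair up, so this fourth moment of the simple
random walk equals `2 A₄(n)`. The sum `signSum p N = ∑ᵢ C(N, i) p(2i - N)` adds up `p(ε₁ + ⋯ + ε_N)`
over all sign vectors `ε ∈ {±1}ᴺ`; splitting off the last sign (Pascal's rule) gives
`signSum p (N + 1) = signSum q N` with `q x = p (x - 1) + p (x + 1)`, whence by induction on `N`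
`signSum 1 N = 2ᴺ`, `signSum x² N = N 2ᴺ` and `signSum x⁴ N = N (3N - 2) 2ᴺ`.
-/

noncomputable def signSum (p : ℝ → ℝ) (N : ℕ) : ℝ :=
  ∑ i ∈ range (N + 1), (N.choose i : ℝ) * p (2 * i - N)

lemma signSum_succ (p : ℝ → ℝ) (N : ℕ) :
    signSum p (N + 1) = signSum (fun x ↦ p (x - 1) + p (x + 1)) N := by
  simp only [signSum, mul_add, sum_add_distrib]
  rw [sum_choose_succ_mul (fun i _ ↦ p (2 * i - (N + 1 : ℕ))) N]
  congr 1 <;> refine sum_congr rfl fun i _ ↦ ?_ <;> push_cast <;> ring_nf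

lemma signSum_one (N : ℕ) : signSum (fun _ ↦ 1) N = 2 ^ N := by
  simp only [signSum, mul_one]
  exact_mod_cast Nat.sum_range_choose N

lemma signSum_sq (N : ℕ) : signSum (· ^ 2) N = N * 2 ^ N := by
  induction N with
  | zero => simp [signSum]
  | succ N ih =>
    have hsplit : signSum (fun x ↦ (x - 1) ^ 2 + (x + 1) ^ 2) N
        = 2 * signSum (· ^ 2) N + 2 * signSum (fun _ ↦ 1) N := by
      simp only [signSum, mul_sum, ← sum_add_distrib]
      exact sum_congr rfl fun i _ ↦ by ring
    rw [signSum_succ, hsplit, ih, signSum_one]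
    push_cast
    ring

lemma signSum_pow_four (N : ℕ) : signSum (· ^ 4) N = N * (3 * N - 2) * 2 ^ N := by
  induction N with
  | zero => simp [signSum]
  | succ N ih =>
    have hsplit : signSum (fun x ↦ (x - 1) ^ 4 + (x + 1) ^ 4) N
        = 2 * signSum (· ^ 4) N + 12 * signSum (· ^ 2) N + 2 * signSum (fun _ ↦ 1) N := by
      simp only [signSum, mul_sum, ← sum_add_distrib]
      exact sum_congr rfl fun i _ ↦ by ring
    rw [signSum_succ, hsplit, ih, signSum_sq, signSum_one]
    push_cast
    ring

lemma signSum_two_mul_of_even (p : ℝ → ℝ) (hp : ∀ x, p (-x) = p x) (n : ℕ) :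
    signSum p (2 * n) =
      ((2 * n).choose n : ℝ) * p 0 + 2 * ∑ k ∈ Icc 1 n, ((2 * n).choose (n - k) : ℝ) * p (2 * k) := by
  have hIcc : ∑ k ∈ Icc 1 n, ((2 * n).choose (n - k) : ℝ) * p (2 * k)
      = ∑ j ∈ range n, ((2 * n).choose (n - (j + 1)) : ℝ) * p (2 * (j + 1 : ℕ)) := by
    rw [← Ico_add_one_right_eq_Icc, sum_Ico_eq_sum_range, Nat.add_sub_cancel]
    exact sum_congr rfl fun j _ ↦ by rw [add_comm 1 j]
  have hlow : ∑ i ∈ range n, ((2 * n).choose i : ℝ) * p (2 * i - (2 * n : ℕ))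
      = ∑ j ∈ range n, ((2 * n).choose (n - (j + 1)) : ℝ) * p (2 * (j + 1 : ℕ)) := by
    rw [← sum_range_reflect]
    refine sum_congr rfl fun j hj ↦ ?_
    have hj : j < n := mem_range.mp hj
    rw [show n - 1 - j = n - (j + 1) by omega, ← hp]
    congr 2
    push_cast [Nat.cast_sub (show j + 1 ≤ n by omega)]
    ring
  have hhigh : ∑ j ∈ range n, ((2 * n).choose (n + 1 + j) : ℝ) * p (2 * (n + 1 + j : ℕ) - (2 * n : ℕ))
      = ∑ j ∈ range n, ((2 * n).choose (n - (j + 1)) : ℝ) * p (2 * (j + 1 : ℕ)) := by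
    refine sum_congr rfl fun j hj ↦ ?_
    have hj : j < n := mem_range.mp hj
    rw [Nat.choose_symm_of_eq_add (show 2 * n = n + 1 + j + (n - (j + 1)) by omega)]
    push_cast
    ring_nf
  rw [signSum, show 2 * n + 1 = n + 1 + n by ring, sum_range_add, sum_range_succ, hlow, hhigh, hIcc]
  push_cast
  ring_nf

theorem A_four_eval (n : ℕ) :
    ∑ k ∈ Finset.Icc 1 n, (((2 * n).choose (n - k) : ℝ)) * (k : ℝ) ^ 4 =
      (2 : ℝ) ^ (2 * (n : ℤ) - 3) * (n : ℝ) * (3 * (n : ℝ) - 1) := by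
  have h := signSum_two_mul_of_even (· ^ 4) (fun x ↦ by ring) n
  have h16 : ∑ k ∈ Icc 1 n, ((2 * n).choose (n - k) : ℝ) * (2 * (k : ℝ)) ^ 4
      = 16 * ∑ k ∈ Icc 1 n, ((2 * n).choose (n - k) : ℝ) * (k : ℝ) ^ 4 := by
    rw [mul_sum]
    exact sum_congr rfl fun k _ ↦ by ring
  have hpow : (2 : ℝ) ^ (2 * (n : ℤ) - 3) = 2 ^ (2 * n) / 8 := by
    rw [zpow_sub₀ two_ne_zero, show 2 * (n : ℤ) = (2 * n : ℕ) by push_cast; ring, zpow_natCast]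
    norm_num
  rw [signSum_pow_four, h16] at h
  rw [hpow]
  push_cast at h
  linear_combination -h / 32
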